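/- Let p be a prime and G a finite p-group such that CD(G) is a quasi-antichain of width w ≥ 3 with G ∈ CD(G), and let a be the positive integer with |G/Z(G)| = p^{2a}. Let t be the number of abelian atoms of CD(G). If t = 0 then p is odd. -/

import Mathlib

/-- The Chermak-Delgado measure of a subgroup `H` of a finite group `G`:
`m_G(H) = |H| · |C_G(H)|`. -/
noncomputable def CDmeasure {G : Type*} [Group G] (H : Subgroup G) : ℕ :=
  Nat.card H * Nat.card (Subgroup.centralizer (H : Set G))

/-- `H` belongs to the Chermak-Delgado lattice of `G`: its measure is maximal. -/
def inCD {G : Type*} [Group G] (H : Subgroup G) : Prop :=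
  ∀ K : Subgroup G, CDmeasure K ≤ CDmeasure H

/-- `CD(G)` is a quasi-antichain of width `w` with `G ∈ CD(G)`. -/
def IsQACD (G : Type*) [Group G] (w : ℕ) : Prop :=
  inCD (⊤ : Subgroup G) ∧ inCD (Subgroup.center G) ∧
  (∀ K : Subgroup G, inCD K → Subgroup.center G ≤ K) ∧
  (∀ K K' : Subgroup G, inCD K → inCD K' →
    Subgroup.center G < K → K ≤ K' → K' < ⊤ → K = K') ∧
  {K : Subgroup G | inCD K ∧ Subgroup.center G < K ∧ K < ⊤}.ncard = w

/-- The set of abelian atoms of the quasi-antichain `CD(G)`. -/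
def abelianAtoms (G : Type*) [Group G] : Set (Subgroup G) :=
  {K : Subgroup G | inCD K ∧ Subgroup.center G < K ∧ K < ⊤ ∧ ∀ x y : K, x * y = y * x}

/-!
Distinct atoms `X ≠ Y` of the quasi-antichain satisfy `X ⊓ Y = Z(G)` and `XY = G`, all atoms have
the same order, and the centralizer of an atom is an atom. Fix an atom `A`, let `B = C(A)`, take a
third atom `L` and `L' = C(L)`; comparing commutators across these four atoms shows that `G/Z(G)`
is abelian, so commutators induce a bimultiplicative alternating pairing on
`G/Z(G) = A/Z × B/Z` in which `A/Z` and `B/Z` are orthogonal. Every other atom is the graph of an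
isomorphism `A/Z ≃ B/Z`; let `σ`, `γ` be those of `L`, `L'` and `R = σ⁻¹γ`. Then `R` is
self-adjoint for `(x, y) ↦ [σx, σy]`, so the graph of `σRⁱ` centralizes the graph of `σRʲ` whenever
`Rⁱ⁺ʲ = R`, and such graphs are atoms. If `R` has odd order `n`, the graph of `σR^((n+1)/2)` is
an abelian atom. If `n` is even, the atoms given by `σ` and `σR^(n/2)` are distinct, so the
involution `R^(n/2)` of `A/Z` fixes only `1`, which is impossible when `|A/Z|` is even.
-/

open Subgroup Pointwise
open scoped commutatorElement

theorem Subgroup.card_mul_relIndex {G : Type*} [Group G] {H K : Subgroup G} (h : H ≤ K) :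
    Nat.card H * H.relIndex K = Nat.card K := by
  rw [← relIndex_bot_left, ← relIndex_bot_left, relIndex_mul_relIndex _ _ _ bot_le h]

theorem Subgroup.card_mul_mul_card_inf {G : Type*} [Group G] (H K : Subgroup G) :
    Nat.card ((H : Set G) * (K : Set G)) * Nat.card ↥(H ⊓ K) = Nat.card H * Nat.card K := by
  have smul_one (a : H) : a • ((1 : G) : G ⧸ K) = ((a : G) : G ⧸ K) := by
    show ((a • (1 : G) : G) : G ⧸ K) = _
    rw [Subgroup.smul_def, smul_eq_mul, mul_one]
  have horbit : MulAction.orbit H ((1 : G) : G ⧸ K) = (H : Set G).image (↑) := by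
    ext q; simp [MulAction.mem_orbit_iff, smul_one]
  have hstab : MulAction.stabilizer H ((1 : G) : G ⧸ K) = K.subgroupOf H := by
    ext; simp [smul_one, mem_subgroupOf, QuotientGroup.eq]
  have hcard : Nat.card ((H : Set G).image ((↑) : G → G ⧸ K)) = K.relIndex H := by
    rw [← horbit, Nat.card_coe_set_eq, ← MulAction.index_stabilizer, hstab, relIndex]
  rw [card_mul_eq_card_subgroup_mul_card_quotient, hcard, ← inf_relIndex_left, mul_comm,
    mul_left_comm, card_mul_relIndex inf_le_left, mul_comm]

theorem Subgroup.centralizer_sup {G : Type*} [Group G] (H K : Subgroup G) :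
    centralizer ((H ⊔ K : Subgroup G) : Set G) = centralizer H ⊓ centralizer K :=
  le_antisymm
    (le_inf (centralizer_le (SetLike.coe_subset_coe.mpr le_sup_left))
      (centralizer_le (SetLike.coe_subset_coe.mpr le_sup_right)))
    (le_centralizer_iff.mp
      (sup_le (le_centralizer_iff.mp inf_le_left) (le_centralizer_iff.mp inf_le_right)))

theorem CDmeasure_top {G : Type*} [Group G] :
    CDmeasure (⊤ : Subgroup G) = Nat.card G * Nat.card (center G) := by
  rw [CDmeasure, coe_top, centralizer_univ, card_top]

theorem inCD.CDmeasure_eq {G : Type*} [Group G] {H K : Subgroup G} (hH : inCD H) (hK : inCD K) :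
    CDmeasure H = CDmeasure K :=
  le_antisymm (hK H) (hH K)

section Finite

variable {G : Type*} [Group G] [Finite G]

theorem Subgroup.card_lt_card_of_lt {H K : Subgroup G} (h : H < K) : Nat.card H < Nat.card K :=
  (card_le_of_le h.le).lt_of_ne fun he => h.ne (eq_of_le_of_card_ge h.le he.ge)

theorem Subgroup.card_mul_card_le_card_sup_mul_card_inf (H K : Subgroup G) :
    Nat.card H * Nat.card K ≤ Nat.card ↥(H ⊔ K) * Nat.card ↥(H ⊓ K) := by
  rw [← card_mul_mul_card_inf]
  refine Nat.mul_le_mul_right _ (Nat.card_mono (Set.toFinite _) ?_)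
  rintro _ ⟨x, hx, y, hy, rfl⟩
  exact mul_mem (mem_sup_left hx) (mem_sup_right hy)

theorem CDmeasure_pos (H : Subgroup G) : 0 < CDmeasure H :=
  Nat.mul_pos Nat.card_pos Nat.card_pos

theorem CDmeasure_le_CDmeasure_centralizer (H : Subgroup G) :
    CDmeasure H ≤ CDmeasure (centralizer (H : Set G)) := by
  rw [CDmeasure, CDmeasure, mul_comm]
  exact Nat.mul_le_mul_left _ (card_le_of_le (le_centralizer_iff.mp le_rfl))

theorem inCD_of_le_centralizer (hTop : inCD (⊤ : Subgroup G)) {H K : Subgroup G}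
    (hK : K ≤ centralizer (H : Set G))
    (hcard : Nat.card G * Nat.card (center G) ≤ Nat.card H * Nat.card K) : inCD H := by
  intro X
  calc CDmeasure X ≤ CDmeasure (⊤ : Subgroup G) := hTop X
    _ ≤ CDmeasure H := by
      rw [CDmeasure_top]
      exact hcard.trans (Nat.mul_le_mul_left _ (card_le_of_le hK))

namespace inCD

variable {H K : Subgroup G}

theorem centralizer (hH : inCD H) : inCD (centralizer (H : Set G)) :=
  fun K => (hH K).trans (CDmeasure_le_CDmeasure_centralizer H)

theorem centralizer_centralizer (hH : inCD H) :
    Subgroup.centralizer (Subgroup.centralizer (H : Set G) : Set G) = H := by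
  have h := hH.centralizer.CDmeasure_eq hH
  rw [CDmeasure, CDmeasure, mul_comm (Nat.card H)] at h
  exact (eq_of_le_of_card_ge (le_centralizer_iff.mp le_rfl)
    (Nat.eq_of_mul_eq_mul_left Nat.card_pos h).le).symm

/-- `m(H) m(K) ≤ m(H ⊔ K) m(H ⊓ K)`, so maximality of `m(H)` and `m(K)` forces equality
throughout. -/
theorem inf_sup (hH : inCD H) (hK : inCD K) :
    inCD (H ⊓ K) ∧ inCD (H ⊔ K) ∧
      Nat.card ↥(H ⊔ K) * Nat.card ↥(H ⊓ K) = Nat.card H * Nat.card K := by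
  set c := Nat.card (Subgroup.centralizer (H : Set G)) *
    Nat.card (Subgroup.centralizer (K : Set G))
  set c' := Nat.card (Subgroup.centralizer ((H ⊓ K : Subgroup G) : Set G)) *
    Nat.card (Subgroup.centralizer ((H ⊔ K : Subgroup G) : Set G))
  have hcard := card_mul_card_le_card_sup_mul_card_inf H K
  have hc : c ≤ c' := by
    refine (card_mul_card_le_card_sup_mul_card_inf _ _).trans
      (Nat.mul_le_mul (card_le_of_le ?_) (card_le_of_le (centralizer_sup H K).ge))
    exact sup_le (centralizer_le (SetLike.coe_subset_coe.mpr inf_le_left))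
      (centralizer_le (SetLike.coe_subset_coe.mpr inf_le_right))
  have hHK : CDmeasure H * CDmeasure K = (Nat.card H * Nat.card K) * c := by
    rw [CDmeasure, CDmeasure]; ring
  have hsupinf : CDmeasure (H ⊔ K) * CDmeasure (H ⊓ K) =
      (Nat.card ↥(H ⊔ K) * Nat.card ↥(H ⊓ K)) * c' := by
    rw [CDmeasure, CDmeasure]; ring
  have heq : CDmeasure (H ⊔ K) * CDmeasure (H ⊓ K) = CDmeasure H * CDmeasure K :=
    le_antisymm (Nat.mul_le_mul (hH _) (hK _))
      (hHK ▸ hsupinf ▸ Nat.mul_le_mul hcard hc)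
  obtain ⟨hsup, hinf⟩ := (mul_eq_mul_iff_eq_and_eq_of_pos (hH _) (hK _)
    (CDmeasure_pos _) (CDmeasure_pos _)).mp heq
  refine ⟨fun X => hinf ▸ hK X, fun X => hsup ▸ hH X, ?_⟩
  rw [hsupinf, hHK] at heq
  exact ((mul_eq_mul_iff_eq_and_eq_of_pos hcard hc
    (Nat.mul_pos Nat.card_pos Nat.card_pos) (Nat.mul_pos Nat.card_pos Nat.card_pos)).mp
      heq.symm).1.symm

end inCD

end Finite

def IsCDAtom {G : Type*} [Group G] (K : Subgroup G) : Prop :=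
  inCD K ∧ center G < K ∧ K < ⊤

namespace IsCDAtom

variable {G : Type*} [Group G] [Finite G] {w : ℕ} {X Y : Subgroup G}

theorem centralizer (hTop : inCD (⊤ : Subgroup G)) (hX : IsCDAtom X) :
    IsCDAtom (Subgroup.centralizer (X : Set G)) := by
  obtain ⟨hXCD, hZX, hXG⟩ := hX
  refine ⟨hXCD.centralizer, (center_le_centralizer _).lt_of_ne fun hC => hXG.ne ?_,
    lt_top_iff_ne_top.mpr fun hC => hZX.ne' ?_⟩
  · have h := hXCD.CDmeasure_eq hTop
    rw [CDmeasure, ← hC, CDmeasure_top] at h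
    exact eq_top_of_card_eq X (Nat.eq_of_mul_eq_mul_right Nat.card_pos h)
  · rw [← hXCD.centralizer_centralizer, hC, coe_top, centralizer_univ]

theorem eq_of_center_lt_inf (hQA : IsQACD G w) (hX : IsCDAtom X) (hY : IsCDAtom Y)
    (h : center G < X ⊓ Y) : X = Y := by
  have hinf := (hX.1.inf_sup hY.1).1
  have hX' := hQA.2.2.2.1 _ _ hinf hX.1 h inf_le_left hX.2.2
  have hY' := hQA.2.2.2.1 _ _ hinf hY.1 h inf_le_right hY.2.2
  exact hX'.symm.trans hY'

theorem eq_of_sup_lt_top (hQA : IsQACD G w) (hX : IsCDAtom X) (hY : IsCDAtom Y)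
    (h : X ⊔ Y < ⊤) : X = Y := by
  have hsup := (hX.1.inf_sup hY.1).2.1
  have hX' := hQA.2.2.2.1 _ _ hX.1 hsup hX.2.1 le_sup_left h
  have hY' := hQA.2.2.2.1 _ _ hY.1 hsup hY.2.1 le_sup_right h
  exact hX'.trans hY'.symm

theorem inf_eq_center (hQA : IsQACD G w) (hX : IsCDAtom X) (hY : IsCDAtom Y) (hne : X ≠ Y) :
    X ⊓ Y = center G :=
  ((hQA.2.2.1 _ (hX.1.inf_sup hY.1).1).lt_or_eq.resolve_left
    fun h => hne (eq_of_center_lt_inf hQA hX hY h)).symm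

theorem sup_eq_top (hQA : IsQACD G w) (hX : IsCDAtom X) (hY : IsCDAtom Y) (hne : X ≠ Y) :
    X ⊔ Y = ⊤ :=
  not_lt_top_iff.mp fun h => hne (eq_of_sup_lt_top hQA hX hY h)

theorem card_mul_card (hQA : IsQACD G w) (hX : IsCDAtom X) (hY : IsCDAtom Y) (hne : X ≠ Y) :
    Nat.card X * Nat.card Y = Nat.card G * Nat.card (center G) := by
  rw [← (hX.1.inf_sup hY.1).2.2, sup_eq_top hQA hX hY hne, inf_eq_center hQA hX hY hne,
    card_top]

theorem mul_eq_univ (hQA : IsQACD G w) (hX : IsCDAtom X) (hY : IsCDAtom Y) (hne : X ≠ Y) :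
    (X : Set G) * (Y : Set G) = Set.univ := by
  refine Set.eq_of_subset_of_ncard_le (Set.subset_univ _) ?_ (Set.toFinite _)
  have h := card_mul_mul_card_inf X Y
  rw [card_mul_card hQA hX hY hne, inf_eq_center hQA hX hY hne] at h
  rw [Set.ncard_univ, ← Nat.card_coe_set_eq, Nat.eq_of_mul_eq_mul_right Nat.card_pos h]

end IsCDAtom

theorem exists_isCDAtom_ne {G : Type*} [Group G] [Finite G] {w : ℕ} (hQA : IsQACD G w)
    (hw : 3 ≤ w) (X Y : Subgroup G) : ∃ W, IsCDAtom W ∧ W ≠ X ∧ W ≠ Y := by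
  have hlt : ({X, Y} : Set (Subgroup G)).ncard < {K | IsCDAtom K}.ncard :=
    calc ({X, Y} : Set (Subgroup G)).ncard ≤ ({Y} : Set (Subgroup G)).ncard + 1 :=
          Set.ncard_insert_le X {Y}
      _ < {K | IsCDAtom K}.ncard := by
          rw [Set.ncard_singleton]
          exact hw.trans_eq hQA.2.2.2.2.symm
  obtain ⟨W, hW, hWXY⟩ := Set.exists_mem_notMem_of_ncard_lt_ncard hlt
  exact ⟨W, hW, fun h => hWXY (Or.inl h), fun h => hWXY (Or.inr h)⟩

theorem IsCDAtom.card_eq {G : Type*} [Group G] [Finite G] {w : ℕ} (hQA : IsQACD G w)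
    (hw : 3 ≤ w) {X Y : Subgroup G} (hX : IsCDAtom X) (hY : IsCDAtom Y) :
    Nat.card X = Nat.card Y := by
  obtain ⟨W, hW, hWX, hWY⟩ := exists_isCDAtom_ne hQA hw X Y
  have h := (hX.card_mul_card hQA hW hWX.symm).trans (hY.card_mul_card hQA hW hWY.symm).symm
  exact Nat.eq_of_mul_eq_mul_right Nat.card_pos h

section ClassTwo

variable {G : Type*} [Group G]

theorem commutatorElement_mem_of_mul_eq_univ {A B L L' : Subgroup G}
    (hAB : A ≤ centralizer (B : Set G)) (hLL' : L ≤ centralizer (L' : Set G))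
    (hL : (L : Set G) * (B : Set G) = Set.univ) (hL' : (L' : Set G) * (B : Set G) = Set.univ)
    {x₁ x₂ : G} (hx₁ : x₁ ∈ A) (hx₂ : x₂ ∈ A) : ⁅x₁, x₂⁆ ∈ A ⊓ B := by
  -- Write `x₁⁻¹ = c y₁ ∈ L' B` and `x₂⁻¹ = l y₂ ∈ L B`; then `c l = l c` turns `⁅x₁, x₂⁆` into
  -- `y₂⁻¹ y₁⁻¹ y₂ y₁ ∈ B`.
  set a₁ := x₁⁻¹
  set a₂ := x₂⁻¹
  obtain ⟨c, hc, y₁, hy₁, hcy⟩ : a₁ ∈ (L' : Set G) * (B : Set G) := hL' ▸ Set.mem_univ _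
  obtain ⟨l, hl, y₂, hy₂, hly⟩ : a₂ ∈ (L : Set G) * (B : Set G) := hL ▸ Set.mem_univ _
  have hc' : c = a₁ * y₁⁻¹ := by rw [← hcy]; group
  have hl' : l = a₂ * y₂⁻¹ := by rw [← hly]; group
  have h₂₁ : a₂ * y₁⁻¹ = y₁⁻¹ * a₂ :=
    (mem_centralizer_iff.mp (hAB (inv_mem hx₂)) _ (inv_mem hy₁)).symm
  have h₁₂ : a₁ * y₂⁻¹ = y₂⁻¹ * a₁ :=
    (mem_centralizer_iff.mp (hAB (inv_mem hx₁)) _ (inv_mem hy₂)).symm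
  have hcl : c * l = l * c := mem_centralizer_iff.mp (hLL' hl) c hc
  have key : a₁ * a₂ * (y₁⁻¹ * y₂⁻¹) = a₂ * a₁ * (y₂⁻¹ * y₁⁻¹) := by
    calc a₁ * a₂ * (y₁⁻¹ * y₂⁻¹) = a₁ * (a₂ * y₁⁻¹) * y₂⁻¹ := by group
      _ = c * l := by rw [h₂₁, hc', hl']; group
      _ = l * c := hcl
      _ = a₂ * (a₁ * y₂⁻¹) * y₁⁻¹ := by rw [h₁₂, hc', hl']; group
      _ = a₂ * a₁ * (y₂⁻¹ * y₁⁻¹) := by group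
  have : ⁅x₁, x₂⁆ = y₂⁻¹ * y₁⁻¹ * y₂ * y₁ := by
    calc ⁅x₁, x₂⁆ = (a₂ * a₁)⁻¹ * (a₁ * a₂ * (y₁⁻¹ * y₂⁻¹)) * (y₁⁻¹ * y₂⁻¹)⁻¹ := by
          rw [commutatorElement_def]; simp only [a₁, a₂]; group
      _ = y₂⁻¹ * y₁⁻¹ * y₂ * y₁ := by rw [key]; group
  refine mem_inf.mpr ⟨?_, ?_⟩
  · rw [commutatorElement_def]
    exact mul_mem (mul_mem (mul_mem hx₁ hx₂) (inv_mem hx₁)) (inv_mem hx₂)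
  · rw [this]
    exact mul_mem (mul_mem (mul_mem (inv_mem hy₂) (inv_mem hy₁)) hy₂) hy₁

theorem commutatorElement_mem_center_iff {x y : G} :
    ⁅x, y⁆ ∈ center G ↔ Commute (x : G ⧸ center G) y := by
  rw [← QuotientGroup.eq_one_iff, ← commutatorElement_eq_one_iff_commute]
  exact Iff.rfl

theorem commutatorElement_mem_center_of_mul_eq_univ {A B : Subgroup G}
    (hAB : A ≤ centralizer (B : Set G)) (hmul : (A : Set G) * (B : Set G) = Set.univ)
    (hA : ∀ x ∈ A, ∀ y ∈ A, ⁅x, y⁆ ∈ center G) (hB : ∀ x ∈ B, ∀ y ∈ B, ⁅x, y⁆ ∈ center G)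
    (x y : G) : ⁅x, y⁆ ∈ center G := by
  obtain ⟨a, ha, b, hb, rfl⟩ : x ∈ (A : Set G) * (B : Set G) := hmul ▸ Set.mem_univ _
  obtain ⟨a', ha', b', hb', rfl⟩ : y ∈ (A : Set G) * (B : Set G) := hmul ▸ Set.mem_univ _
  have hba' : Commute ((b : G) : G ⧸ center G) a' :=
    (Commute.map (mem_centralizer_iff.mp (hAB ha') b hb) (QuotientGroup.mk' (center G)))
  have hab' : Commute ((a : G) : G ⧸ center G) b' :=
    (Commute.map (mem_centralizer_iff.mp (hAB ha) b' hb').symm (QuotientGroup.mk' (center G)))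
  rw [commutatorElement_mem_center_iff, QuotientGroup.mk_mul, QuotientGroup.mk_mul]
  exact ((commutatorElement_mem_center_iff.mp (hA a ha a' ha')).mul_left hba').mul_right
    (hab'.mul_left (commutatorElement_mem_center_iff.mp (hB b hb b' hb')))

end ClassTwo

section CommutatorPairing

variable {G : Type*} [Group G]

theorem commutatorElement_mul_mem_center {x y z₁ z₂ : G} (hz₁ : z₁ ∈ center G)
    (hz₂ : z₂ ∈ center G) : ⁅x * z₁, y * z₂⁆ = ⁅x, y⁆ := by
  rw [commutatorElement_mul_left_eq_conj_mul,
    commutatorElement_eq_one_iff_commute.mpr (mem_center_iff.mp hz₁ _).symm,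
    commutatorElement_mul_right_eq_mul_conj,
    commutatorElement_eq_one_iff_commute.mpr (mem_center_iff.mp hz₂ _)]
  group

variable (G) in
def commutatorPairing (u v : G ⧸ center G) : G :=
  Quotient.liftOn₂' u v (fun x y => ⁅x, y⁆) fun x₁ x₂ y₁ y₂ h₁ h₂ => by
    rw [← mul_inv_cancel_left x₁ y₁, ← mul_inv_cancel_left x₂ y₂,
      commutatorElement_mul_mem_center (QuotientGroup.leftRel_apply.mp h₁)
        (QuotientGroup.leftRel_apply.mp h₂)]

@[simp]
theorem commutatorPairing_mk (x y : G) :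
    commutatorPairing G (x : G ⧸ center G) (y : G ⧸ center G) = ⁅x, y⁆ :=
  rfl

theorem commutatorPairing_inv (u v : G ⧸ center G) :
    (commutatorPairing G u v)⁻¹ = commutatorPairing G v u := by
  induction u using QuotientGroup.induction_on
  induction v using QuotientGroup.induction_on
  exact commutatorElement_inv _ _

theorem commutatorPairing_mul_left (hG : ∀ x y : G, ⁅x, y⁆ ∈ center G) (u w v : G ⧸ center G) :
    commutatorPairing G (u * w) v = commutatorPairing G u v * commutatorPairing G w v := by
  induction u using QuotientGroup.induction_on with | H x =>
  induction w using QuotientGroup.induction_on with | H x' =>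
  induction v using QuotientGroup.induction_on with | H y =>
  rw [← QuotientGroup.mk_mul, commutatorPairing_mk, commutatorPairing_mk, commutatorPairing_mk,
    commutatorElement_mul_left_eq_conj_mul, mem_center_iff.mp (hG x' y) x,
    mul_inv_cancel_right, mem_center_iff.mp (hG x' y)]

theorem commutatorPairing_mul_right (hG : ∀ x y : G, ⁅x, y⁆ ∈ center G) (u v w : G ⧸ center G) :
    commutatorPairing G u (v * w) = commutatorPairing G u v * commutatorPairing G u w := by
  rw [← commutatorPairing_inv, commutatorPairing_mul_left hG, mul_inv_rev, commutatorPairing_inv,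
    commutatorPairing_inv]
  induction u using QuotientGroup.induction_on with | H x =>
  induction v using QuotientGroup.induction_on with | H y =>
  exact mem_center_iff.mp (hG x y) _

theorem commutatorPairing_mul_mul (hG : ∀ x y : G, ⁅x, y⁆ ∈ center G)
    {a b a' b' : G ⧸ center G} (hab' : commutatorPairing G a b' = 1)
    (hba' : commutatorPairing G b a' = 1) :
    commutatorPairing G (a * b) (a' * b') =
      commutatorPairing G a a' * commutatorPairing G b b' := by
  rw [commutatorPairing_mul_left hG, commutatorPairing_mul_right hG,
    commutatorPairing_mul_right hG, hab', hba', mul_one, one_mul]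

abbrev Subgroup.modCenter (X : Subgroup G) : Subgroup (G ⧸ center G) :=
  X.map (QuotientGroup.mk' (center G))

theorem Subgroup.modCenter_le_centralizer {A B : Subgroup G}
    (hAB : A ≤ centralizer (B : Set G)) :
    A.modCenter ≤ centralizer (B.modCenter : Set (G ⧸ center G)) :=
  (map_mono hAB).trans ((map_centralizer_le_centralizer_image _ _).trans_eq (by rw [coe_map]))

theorem commutatorPairing_eq_one_of_le_centralizer {A B : Subgroup G}
    (hAB : A ≤ centralizer (B : Set G)) {u v : G ⧸ center G} (hu : u ∈ A.modCenter)
    (hv : v ∈ B.modCenter) :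
    commutatorPairing G u v = 1 := by
  obtain ⟨x, hx, rfl⟩ := hu
  obtain ⟨y, hy, rfl⟩ := hv
  exact commutatorElement_eq_one_iff_mul_comm.mpr (mem_centralizer_iff.mp (hAB hx) y hy).symm

theorem comap_le_centralizer_comap {U U' : Subgroup (G ⧸ center G)}
    (h : ∀ u ∈ U, ∀ v ∈ U', commutatorPairing G u v = 1) :
    U.comap (QuotientGroup.mk' (center G)) ≤
      centralizer (U'.comap (QuotientGroup.mk' (center G)) : Set G) := fun _ hx =>
  mem_centralizer_iff.mpr fun _ hy => (commutatorElement_eq_one_iff_mul_comm.mp (h _ hx _ hy)).symm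

end CommutatorPairing

section Quotient

variable {G : Type*} [Group G] {N : Subgroup G} [N.Normal]

theorem card_map_mk'_mul_card {X : Subgroup G} (hN : N ≤ X) :
    Nat.card (X.map (QuotientGroup.mk' N)) * Nat.card N = Nat.card X := by
  rw [← relIndex_ker, QuotientGroup.ker_mk', mul_comm, card_mul_relIndex hN]

theorem card_comap_mk' (U : Subgroup (G ⧸ N)) :
    Nat.card (U.comap (QuotientGroup.mk' N)) = Nat.card U * Nat.card N := by
  rw [← card_map_mk'_mul_card (QuotientGroup.ker_mk' N ▸ MonoidHom.ker_le_comap _ U),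
    map_comap_eq_self_of_surjective (QuotientGroup.mk'_surjective N)]

theorem map_mk'_inf_map_mk' {X Y : Subgroup G} (hX : N ≤ X) (hY : N ≤ Y) :
    X.map (QuotientGroup.mk' N) ⊓ Y.map (QuotientGroup.mk' N) =
      (X ⊓ Y).map (QuotientGroup.mk' N) := by
  refine comap_injective (QuotientGroup.mk'_surjective N) ?_
  rw [comap_inf, comap_map_eq_self, comap_map_eq_self, comap_map_eq_self] <;>
    simp [hX, hY, le_inf hX hY]

end Quotient

section Graph

variable {V : Type*} [Group V] {A B : Subgroup V} (hAB : A ≤ centralizer (B : Set V))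

def Subgroup.mulOfLeCentralizer : A × B →* V :=
  A.subtype.noncommCoprod B.subtype fun a b =>
    show Commute (a : V) b from (mem_centralizer_iff.mp (hAB a.2) b b.2).symm

@[simp]
theorem Subgroup.mulOfLeCentralizer_apply (p : A × B) :
    mulOfLeCentralizer hAB p = (p.1 : V) * p.2 :=
  rfl

theorem Subgroup.bijective_mulOfLeCentralizer (hinf : A ⊓ B = ⊥) (hsup : A ⊔ B = ⊤) :
    Function.Bijective (mulOfLeCentralizer hAB) := by
  refine ⟨(MonoidHom.noncommCoprod_injective _ _ _).mpr
    ⟨A.subtype_injective, B.subtype_injective, ?_⟩, ?_⟩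
  · rw [range_subtype, range_subtype, disjoint_iff, hinf]
  · rw [← MonoidHom.range_eq_top]
    refine (MonoidHom.noncommCoprod_range _ _ _).trans ?_
    rw [range_subtype, range_subtype, hsup]

theorem Subgroup.mem_map_graph {ψ : A →* B} {v : V} :
    v ∈ ψ.graph.map (mulOfLeCentralizer hAB) ↔ ∃ a : A, (a : V) * ψ a = v := by
  simp [MonoidHom.mem_graph]

theorem Subgroup.card_map_graph (hinf : A ⊓ B = ⊥) (hsup : A ⊔ B = ⊤) (ψ : A →* B) :
    Nat.card (ψ.graph.map (mulOfLeCentralizer hAB)) = Nat.card A := by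
  rw [card_map_of_injective (bijective_mulOfLeCentralizer hAB hinf hsup).1]
  exact Nat.card_congr
    { toFun := fun p => p.1.1, invFun := fun a => ⟨(a, ψ a), rfl⟩,
      left_inv := fun ⟨p, hp⟩ => Subtype.ext (Prod.ext rfl hp), right_inv := fun _ => rfl }

theorem Subgroup.exists_mulEquiv_eq_map_graph [Finite V] (hinf : A ⊓ B = ⊥) (hsup : A ⊔ B = ⊤)
    {W : Subgroup V} (hWA : W ⊓ A = ⊥) (hWB : W ⊓ B = ⊥) (hcardA : Nat.card W = Nat.card A)
    (hcardB : Nat.card W = Nat.card B) :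
    ∃ σ : A ≃* B, W = σ.toMonoidHom.graph.map (mulOfLeCentralizer hAB) := by
  have he := bijective_mulOfLeCentralizer hAB hinf hsup
  have hW : (W.comap (mulOfLeCentralizer hAB)).map (mulOfLeCentralizer hAB) = W :=
    map_comap_eq_self_of_surjective he.2 W
  have hcard : Nat.card (W.comap (mulOfLeCentralizer hAB)) = Nat.card W := by
    conv_rhs => rw [← hW]
    rw [card_map_of_injective he.1]
  have hfst : Function.Injective
      ((MonoidHom.fst A B).comp (W.comap (mulOfLeCentralizer hAB)).subtype) := by
    refine (injective_iff_map_eq_one _).mpr fun ⟨p, hp⟩ h1 => ?_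
    have h1 : p.1 = 1 := h1
    have hp2 : (p.2 : V) ∈ W ⊓ B := ⟨by simpa [h1] using hp, p.2.2⟩
    rw [hWB, mem_bot] at hp2
    exact Subtype.ext (Prod.ext h1 (Subtype.ext hp2))
  have hsnd : Function.Injective
      ((MonoidHom.snd A B).comp (W.comap (mulOfLeCentralizer hAB)).subtype) := by
    refine (injective_iff_map_eq_one _).mpr fun ⟨p, hp⟩ h1 => ?_
    have h1 : p.2 = 1 := h1
    have hp1 : (p.1 : V) ∈ W ⊓ A := ⟨by simpa [h1] using hp, p.1.2⟩
    rw [hWA, mem_bot] at hp1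
    exact Subtype.ext (Prod.ext (Subtype.ext hp1) h1)
  obtain ⟨σ, hσ⟩ := Subgroup.exists_mulEquiv_eq_graph
    ((Nat.bijective_iff_injective_and_card _).mpr ⟨hfst, hcard.trans hcardA⟩)
    ((Nat.bijective_iff_injective_and_card _).mpr ⟨hsnd, hcard.trans hcardB⟩)
  exact ⟨σ, hW.symm.trans (congrArg _ hσ)⟩

end Graph

theorem MulEquiv.pairing_pow_eq_inv {X Y M : Type*} [Mul X] [Mul Y] [Group M]
    {fX : X → X → M} {fY : Y → Y → M} (hX : ∀ x y, (fX x y)⁻¹ = fX y x)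
    (hY : ∀ x y, (fY x y)⁻¹ = fY y x) {σ γ : X ≃* Y} (hσγ : ∀ x y, fY (σ x) (γ y) = (fX x y)⁻¹)
    {i j : ℕ} (hij : (γ.trans σ.symm : MulAut X) ^ (i + j) = γ.trans σ.symm) (x y : X) :
    fY (σ (((γ.trans σ.symm : MulAut X) ^ i) x)) (σ (((γ.trans σ.symm : MulAut X) ^ j) y)) =
      (fX x y)⁻¹ := by
  set R : MulAut X := γ.trans σ.symm
  have hσR (x : X) : σ (R x) = γ x := σ.apply_symm_apply (γ x)
  have hadj (x y : X) : fY (σ (R x)) (σ y) = fY (σ x) (σ (R y)) := by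
    rw [hσR, hσR, ← hY (σ y) (γ x), hσγ, inv_inv, ← hX x y, ← hσγ]
  have hpow (k : ℕ) (x y : X) : fY (σ ((R ^ k) x)) (σ y) = fY (σ x) (σ ((R ^ k) y)) := by
    induction k generalizing x y with
    | zero => rfl
    | succ k ih =>
      rw [pow_succ, MulAut.mul_apply, ih, hadj, ← MulAut.mul_apply, ← pow_succ', pow_succ]
  rw [hpow, ← MulAut.mul_apply, ← pow_add, hij, hσR, hσγ]

theorem MulAut.exists_ne_one_apply_eq_self {X : Type*} [Group X] [Finite X] (S : MulAut X)
    (hS : S ^ 2 = 1) (h2 : 2 ∣ Nat.card X) : ∃ x, x ≠ 1 ∧ S x = x := by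
  classical
  have := Fintype.ofFinite X
  set σ : Equiv.Perm X := S.toEquiv
  have hσ : σ ^ 2 ^ 1 = 1 := by
    ext x
    exact DFunLike.congr_fun hS x
  have hmod := Equiv.Perm.card_compl_support_modEq hσ
  have h1 : (1 : X) ∈ σ.supportᶜ := by simp [σ, Equiv.Perm.mem_support]
  rw [← Nat.card_eq_fintype_card] at hmod
  have hlt : 1 < σ.supportᶜ.card := by
    have := Finset.card_pos.mpr ⟨1, h1⟩
    unfold Nat.ModEq at hmod
    omega
  obtain ⟨x, hx, hx1⟩ := Finset.exists_mem_ne hlt 1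
  exact ⟨x, hx1, by simpa [σ, Equiv.Perm.mem_support] using hx⟩

section AtomsModCenter

variable {G : Type*} [Group G]

theorem IsCDAtom.card_modCenter_mul {A : Subgroup G} (hA : IsCDAtom A) :
    Nat.card A.modCenter * Nat.card (center G) = Nat.card A :=
  card_map_mk'_mul_card hA.2.1.le

variable [Finite G] {w : ℕ} {A B : Subgroup G}

theorem IsCDAtom.modCenter_inf_eq_bot (hQA : IsQACD G w) (hA : IsCDAtom A) (hB : IsCDAtom B)
    (hne : A ≠ B) : A.modCenter ⊓ B.modCenter = ⊥ := by
  rw [map_mk'_inf_map_mk' hA.2.1.le hB.2.1.le, hA.inf_eq_center hQA hB hne,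
    QuotientGroup.map_mk'_self]

theorem IsCDAtom.modCenter_sup_eq_top (hQA : IsQACD G w) (hA : IsCDAtom A) (hB : IsCDAtom B)
    (hne : A ≠ B) : A.modCenter ⊔ B.modCenter = ⊤ := by
  rw [← Subgroup.map_sup, hA.sup_eq_top hQA hB hne,
    map_top_of_surjective _ (QuotientGroup.mk'_surjective _)]

theorem IsCDAtom.two_dvd_card_modCenter {n : ℕ} (hcard : Nat.card (G ⧸ center G) = 2 ^ n)
    (hA : IsCDAtom A) : 2 ∣ Nat.card A.modCenter := by
  obtain ⟨k, -, hk⟩ := (Nat.dvd_prime_pow Nat.prime_two).mp (hcard ▸ card_subgroup_dvd_card _)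
  rw [hk]
  refine dvd_pow_self 2 fun hk0 => ?_
  have h := hA.card_modCenter_mul
  rw [hk, hk0, pow_zero, one_mul] at h
  exact (card_lt_card_of_lt hA.2.1).ne h

end AtomsModCenter

section GraphPreimage

variable {G : Type*} [Group G] {A B : Subgroup G} (hAB : A ≤ centralizer (B : Set G))

def graphPreimage (ψ : A.modCenter →* B.modCenter) : Subgroup G :=
  (ψ.graph.map (mulOfLeCentralizer (modCenter_le_centralizer hAB))).comap
    (QuotientGroup.mk' (center G))

theorem mem_graphPreimage {ψ : A.modCenter →* B.modCenter} {g : G} :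
    g ∈ graphPreimage hAB ψ ↔ ∃ a : A.modCenter, (a : G ⧸ center G) * ψ a = g := by
  rw [graphPreimage, mem_comap, mem_map_graph]
  rfl

theorem center_le_graphPreimage (ψ : A.modCenter →* B.modCenter) :
    center G ≤ graphPreimage hAB ψ :=
  (QuotientGroup.ker_mk' _).symm.le.trans (MonoidHom.ker_le_comap _ _)

theorem graphPreimage_le_centralizer_iff (hG : ∀ x y : G, ⁅x, y⁆ ∈ center G)
    {ψ χ : A.modCenter →* B.modCenter} :
    graphPreimage hAB ψ ≤ centralizer (graphPreimage hAB χ : Set G) ↔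
      ∀ x y : A.modCenter,
        commutatorPairing G (ψ x) (χ y) = (commutatorPairing G x y)⁻¹ := by
  have hBA : B ≤ centralizer (A : Set G) := le_centralizer_iff.mp hAB
  have key (x y : A.modCenter) : commutatorPairing G (x * ψ x) (y * χ y) =
      commutatorPairing G x y * commutatorPairing G (ψ x) (χ y) :=
    commutatorPairing_mul_mul hG (commutatorPairing_eq_one_of_le_centralizer hAB x.2 (χ y).2)
      (commutatorPairing_eq_one_of_le_centralizer hBA (ψ x).2 y.2)
  constructor
  · intro h x y
    obtain ⟨g, hg⟩ := QuotientGroup.mk_surjective (x * ψ x : G ⧸ center G)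
    obtain ⟨g', hg'⟩ := QuotientGroup.mk_surjective (y * χ y : G ⧸ center G)
    have hcomm := mem_centralizer_iff.mp (h ((mem_graphPreimage hAB).mpr ⟨x, hg.symm⟩)) g'
      ((mem_graphPreimage hAB).mpr ⟨y, hg'.symm⟩)
    have h1 : commutatorPairing G (x * ψ x) (y * χ y) = 1 := by
      rw [← hg, ← hg', commutatorPairing_mk, commutatorElement_eq_one_iff_mul_comm, hcomm]
    exact eq_inv_of_mul_eq_one_right ((key x y).symm.trans h1)
  · intro h
    refine comap_le_centralizer_comap fun _ hu _ hv => ?_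
    obtain ⟨x, rfl⟩ := (mem_map_graph _).mp hu
    obtain ⟨y, rfl⟩ := (mem_map_graph _).mp hv
    rw [key, h, mul_inv_cancel]

theorem card_graphPreimage (hinf : A.modCenter ⊓ B.modCenter = ⊥)
    (hsup : A.modCenter ⊔ B.modCenter = ⊤) (hA : center G ≤ A) (ψ : A.modCenter →* B.modCenter) :
    Nat.card (graphPreimage hAB ψ) = Nat.card A := by
  rw [graphPreimage, card_comap_mk', card_map_graph _ hinf hsup, card_map_mk'_mul_card hA]

theorem graphPreimage_injective (hinf : A.modCenter ⊓ B.modCenter = ⊥)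
    (hsup : A.modCenter ⊔ B.modCenter = ⊤) : Function.Injective (graphPreimage hAB) := by
  intro ψ χ h
  have h' := map_injective (bijective_mulOfLeCentralizer _ hinf hsup).1
    (comap_injective (QuotientGroup.mk'_surjective _) h)
  exact MonoidHom.ext fun x =>
    (MonoidHom.mem_graph.mp (h' ▸ (MonoidHom.mem_graph.mpr rfl : (x, ψ x) ∈ ψ.graph))).symm

theorem center_lt_graphPreimage_inf (hinf : A.modCenter ⊓ B.modCenter = ⊥)
    (hsup : A.modCenter ⊔ B.modCenter = ⊤) {ψ χ : A.modCenter →* B.modCenter}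
    {x : A.modCenter} (hx : x ≠ 1) (h : ψ x = χ x) :
    center G < graphPreimage hAB ψ ⊓ graphPreimage hAB χ := by
  obtain ⟨g, hg⟩ := QuotientGroup.mk_surjective (x * ψ x : G ⧸ center G)
  refine SetLike.lt_iff_le_and_exists.mpr ⟨le_inf (center_le_graphPreimage _ _)
    (center_le_graphPreimage _ _), g, mem_inf.mpr ⟨(mem_graphPreimage hAB).mpr ⟨x, hg.symm⟩,
      (mem_graphPreimage hAB).mpr ⟨x, h ▸ hg.symm⟩⟩, fun hgZ => hx ?_⟩
  have h1 : mulOfLeCentralizer (modCenter_le_centralizer hAB) (x, ψ x) =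
      mulOfLeCentralizer (modCenter_le_centralizer hAB) 1 := by
    rw [map_one, mulOfLeCentralizer_apply, ← hg]
    exact (QuotientGroup.eq_one_iff g).mpr hgZ
  exact congrArg Prod.fst ((bijective_mulOfLeCentralizer _ hinf hsup).1 h1)

end GraphPreimage

section GraphPreimageAtom

variable {G : Type*} [Group G] [Finite G] {w : ℕ} {A B : Subgroup G}

theorem isCDAtom_graphPreimage (hQA : IsQACD G w) (hw : 3 ≤ w) (hA : IsCDAtom A)
    (hB : IsCDAtom B) (hne : A ≠ B) (hAB : A ≤ centralizer (B : Set G))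
    {ψ χ : A.modCenter →* B.modCenter}
    (h : graphPreimage hAB ψ ≤ centralizer (graphPreimage hAB χ : Set G)) :
    IsCDAtom (graphPreimage hAB ψ) := by
  have hcard := card_graphPreimage hAB (hA.modCenter_inf_eq_bot hQA hB hne)
    (hA.modCenter_sup_eq_top hQA hB hne) hA.2.1.le
  have hAA := hA.card_mul_card hQA hB hne
  rw [← hA.card_eq hQA hw hB] at hAA
  refine ⟨inCD_of_le_centralizer hQA.1 (le_centralizer_iff.mp h)
    (by rw [hcard ψ, hcard χ]; exact hAA.ge), ?_, ?_⟩
  · refine (center_le_graphPreimage hAB ψ).lt_of_ne fun hZ => ?_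
    exact (card_lt_card_of_lt hA.2.1).ne (by rw [hZ, hcard])
  · refine lt_top_iff_ne_top.mpr fun hG => ?_
    exact (card_lt_card_of_lt hA.2.2).ne (by rw [← hcard ψ, hG, card_top])

theorem IsCDAtom.exists_mulEquiv_eq_graphPreimage (hQA : IsQACD G w) (hw : 3 ≤ w)
    (hA : IsCDAtom A) (hB : IsCDAtom B) (hne : A ≠ B) (hAB : A ≤ Subgroup.centralizer (B : Set G))
    {W : Subgroup G} (hW : IsCDAtom W) (hWA : W ≠ A) (hWB : W ≠ B) :
    ∃ σ : A.modCenter ≃* B.modCenter, W = graphPreimage hAB σ.toMonoidHom := by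
  have hcard {X : Subgroup G} (hX : IsCDAtom X) : Nat.card W.modCenter = Nat.card X.modCenter :=
    Nat.eq_of_mul_eq_mul_right Nat.card_pos (hW.card_modCenter_mul.trans
      ((hW.card_eq hQA hw hX).trans hX.card_modCenter_mul.symm))
  obtain ⟨σ, hσ⟩ := exists_mulEquiv_eq_map_graph (modCenter_le_centralizer hAB)
    (hA.modCenter_inf_eq_bot hQA hB hne) (hA.modCenter_sup_eq_top hQA hB hne)
    (hW.modCenter_inf_eq_bot hQA hA hWA) (hW.modCenter_inf_eq_bot hQA hB hWB) (hcard hA) (hcard hB)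
  refine ⟨σ, ?_⟩
  rw [graphPreimage, ← hσ, comap_map_eq_self]
  rw [QuotientGroup.ker_mk']
  exact hW.2.1.le

end GraphPreimageAtom

section Contradiction

variable {G : Type*} [Group G] [Finite G] {w : ℕ}

theorem commutatorElement_mem_center_of_isCDAtom (hQA : IsQACD G w) {A B L L' : Subgroup G}
    (hA : IsCDAtom A) (hB : IsCDAtom B) (hL : IsCDAtom L) (hL' : IsCDAtom L')
    (hAB : A ≤ centralizer (B : Set G)) (hLL' : L ≤ centralizer (L' : Set G)) (hne : A ≠ B)
    (hLA : L ≠ A) (hLB : L ≠ B) (hL'A : L' ≠ A) (hL'B : L' ≠ B) (x y : G) :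
    ⁅x, y⁆ ∈ center G := by
  refine commutatorElement_mem_center_of_mul_eq_univ hAB (hA.mul_eq_univ hQA hB hne)
    (fun x hx y hy => ?_) (fun x hx y hy => ?_) x y
  · rw [← hA.inf_eq_center hQA hB hne]
    exact commutatorElement_mem_of_mul_eq_univ hAB hLL' (hL.mul_eq_univ hQA hB hLB)
      (hL'.mul_eq_univ hQA hB hL'B) hx hy
  · rw [← hB.inf_eq_center hQA hA hne.symm]
    exact commutatorElement_mem_of_mul_eq_univ (le_centralizer_iff.mp hAB) hLL'
      (hL.mul_eq_univ hQA hA hLA) (hL'.mul_eq_univ hQA hA hL'A) hx hy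

theorem false_of_graphPreimage_le_centralizer (hQA : IsQACD G w) (hw : 3 ≤ w)
    (hnonabelian : ∀ K, IsCDAtom K → ¬K ≤ centralizer (K : Set G))
    (hG : ∀ x y : G, ⁅x, y⁆ ∈ center G) {A B : Subgroup G} (hA : IsCDAtom A) (hB : IsCDAtom B)
    (hne : A ≠ B) (hAB : A ≤ centralizer (B : Set G)) (h2 : 2 ∣ Nat.card A.modCenter)
    {σ γ : A.modCenter ≃* B.modCenter}
    (hσγ : ∀ x y, commutatorPairing G (σ x) (γ y) = (commutatorPairing G x y)⁻¹) : False := by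
  set R : MulAut A.modCenter := γ.trans σ.symm
  set U : ℕ → Subgroup G := fun k => graphPreimage hAB ((R ^ k).trans σ).toMonoidHom
  have hcomm (i j : ℕ) (hij : R ^ (i + j) = R) : U i ≤ centralizer (U j : Set G) :=
    (graphPreimage_le_centralizer_iff hAB hG).mpr
      (MulEquiv.pairing_pow_eq_inv (fX := fun x y : A.modCenter => commutatorPairing G x y)
        (fY := fun x y : B.modCenter => commutatorPairing G x y)
        (fun x y => commutatorPairing_inv (x : G ⧸ center G) y)
        (fun x y => commutatorPairing_inv (x : G ⧸ center G) y) hσγ hij)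
  have hatom (i j : ℕ) (hij : R ^ (i + j) = R) : IsCDAtom (U i) :=
    isCDAtom_graphPreimage hQA hw hA hB hne hAB (hcomm i j hij)
  obtain ⟨m, hm | hm⟩ := Nat.even_or_odd' (orderOf R)
  · -- `U 0` and `U m` are atoms sharing a point outside `Z(G)`, so they coincide and `R ^ m = 1`.
    have hm0 : m ≠ 0 := by
      rintro rfl
      exact (orderOf_pos R).ne' hm
    have hRm : R ^ (m + (m + 1)) = R := by
      rw [← add_assoc, ← two_mul, ← hm, pow_succ, pow_orderOf_eq_one, one_mul]
    obtain ⟨x, hx, hSx⟩ := MulAut.exists_ne_one_apply_eq_self (R ^ m)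
      (by rw [← pow_mul, mul_comm, ← hm, pow_orderOf_eq_one]) h2
    have hU : U 0 = U m := (hatom 0 1 (by rw [zero_add, pow_one])).eq_of_center_lt_inf hQA
      (hatom m (m + 1) hRm) (center_lt_graphPreimage_inf hAB (hA.modCenter_inf_eq_bot hQA hB hne)
        (hA.modCenter_sup_eq_top hQA hB hne) hx (by simp [hSx]))
    have hRm1 : R ^ m = 1 := by
      have h := graphPreimage_injective hAB (hA.modCenter_inf_eq_bot hQA hB hne)
        (hA.modCenter_sup_eq_top hQA hB hne) hU
      ext y
      exact congrArg Subtype.val (σ.injective (DFunLike.congr_fun h y)).symm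
    have := Nat.le_of_dvd (Nat.pos_of_ne_zero hm0) (hm ▸ orderOf_dvd_of_pow_eq_one hRm1)
    omega
  · have hRk : R ^ ((m + 1) + (m + 1)) = R := by
      rw [show (m + 1) + (m + 1) = 2 * m + 1 + 1 by ring, ← hm, pow_succ, pow_orderOf_eq_one,
        one_mul]
    exact hnonabelian _ (hatom _ _ hRk) (hcomm _ _ hRk)

theorem false_of_forall_isCDAtom_not_le_centralizer (hQA : IsQACD G w) (hw : 3 ≤ w) {n : ℕ}
    (hcard : Nat.card (G ⧸ center G) = 2 ^ n)
    (hnonabelian : ∀ K, IsCDAtom K → ¬K ≤ centralizer (K : Set G)) : False := by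
  obtain ⟨A, hA, -⟩ := exists_isCDAtom_ne hQA hw ⊥ ⊥
  set B := centralizer (A : Set G)
  obtain ⟨L, hL, hLA, hLB⟩ := exists_isCDAtom_ne hQA hw A B
  set L' := centralizer (L : Set G)
  have hB : IsCDAtom B := hA.centralizer hQA.1
  have hL' : IsCDAtom L' := hL.centralizer hQA.1
  have hAB : A ≤ centralizer (B : Set G) := le_centralizer_iff.mp le_rfl
  have hLL' : L ≤ centralizer (L' : Set G) := le_centralizer_iff.mp le_rfl
  have hne : A ≠ B := fun h => hnonabelian B hB (h ▸ hAB)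
  have hC {X Y : Subgroup G} (h : X = Y) : centralizer (X : Set G) = centralizer (Y : Set G) :=
    congrArg (fun X : Subgroup G => centralizer (X : Set G)) h
  have hL'A : L' ≠ A := fun h => hLB (hL.1.centralizer_centralizer.symm.trans (hC h))
  have hL'B : L' ≠ B := fun h =>
    hLA (hL.1.centralizer_centralizer.symm.trans ((hC h).trans hA.1.centralizer_centralizer))
  have hG := commutatorElement_mem_center_of_isCDAtom hQA hA hB hL hL' hAB hLL' hne hLA hLB hL'A
    hL'B
  obtain ⟨σ, hσ⟩ := hA.exists_mulEquiv_eq_graphPreimage hQA hw hB hne hAB hL hLA hLB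
  obtain ⟨γ, hγ⟩ := hA.exists_mulEquiv_eq_graphPreimage hQA hw hB hne hAB hL' hL'A hL'B
  rw [hγ, hσ] at hLL'
  exact false_of_graphPreimage_le_centralizer hQA hw hnonabelian hG hA hB hne hAB
    (hA.two_dvd_card_modCenter hcard) ((graphPreimage_le_centralizer_iff hAB hG).mp hLL')

end Contradiction

theorem stmt9_general {G : Type*} [Group G] [Finite G] (p : ℕ) (hp : p.Prime)
    (w : ℕ) (hw : 3 ≤ w) (hQA : IsQACD G w)
    (a : ℕ)
    (hcard : Nat.card (G ⧸ Subgroup.center G) = p ^ (2 * a))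
    (t : ℕ) (ht : t = (abelianAtoms G).ncard) :
    t = 0 → Odd p := by
  rintro rfl
  refine hp.odd_of_ne_two fun hp2 => ?_
  subst hp2
  refine false_of_forall_isCDAtom_not_le_centralizer hQA hw hcard fun K hK hKK => ?_
  have hK : K ∈ abelianAtoms G :=
    ⟨hK.1, hK.2.1, hK.2.2, fun x y => Subtype.ext (mem_centralizer_iff.mp (hKK y.2) x x.2)⟩
  rwa [(Set.ncard_eq_zero (Set.toFinite _)).mp ht.symm] at hK

/-- for a finite `p`-group `G` with `CD(G)` a quasi-antichain of
width `w ≥ 3`, `G ∈ CD(G)`, and `|G/Z(G)| = p^(2a)`: if the number `t` of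
abelian atoms is `0`, then `p` is odd. -/
theorem stmt9 {G : Type*} [Group G] [Finite G] (p : ℕ) (hp : p.Prime)
    (hpG : IsPGroup p G) (w : ℕ) (hw : 3 ≤ w) (hQA : IsQACD G w)
    (a : ℕ) (ha : 0 < a)
    (hcard : Nat.card (G ⧸ Subgroup.center G) = p ^ (2 * a))
    (t : ℕ) (ht : t = (abelianAtoms G).ncard) :
    t = 0 → Odd p :=
  stmt9_general p hp w hw hQA a hcard t ht
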